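/- arXiv:2301.03159 — 4 statements merged into one kernel-verified Lean document; each statement's English description precedes it below -/
import Mathlib

section
/- For every bounded linear operator A on a complex Hilbert space H, w(A)^2 ≤ (1/4)·w(|A| + i|A*|)^2 + (1/8)·‖|A|² + |A*|²‖ + (1/4)·w(|A||A*|), where w denotes the numerical radius, |A| = (A*A)^{1/2}, and |A*| = (AA*)^{1/2}. -/
/-!
For a unit vector `x` put `a = ⟪|A| x, x⟫` and `b = ⟪|A*| x, x⟫`. The mixed Schwarz inequality
gives `|⟪A x, x⟫|² ≤ a b`; it is proved without polar decomposition, by regularizing `|A|` to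
`|A| + ε` and using that `A f(A*A) = f(AA*) A` for continuous `f`. Since `|A|` and `|A*|` are
self-adjoint, `a² + b² = |⟪(|A| + i|A*|) x, x⟫|² ≤ w(|A| + i|A*|)²` and
`(a + b)² ≤ ‖(|A| + |A*|) x‖² ≤ ‖|A|² + |A*|²‖ + 2 w(|A||A*|)`. Finally
`a b ≤ (a² + b²)/4 + (a + b)²/8`, because the difference is `3 (a - b)² / 8`.
-/

open scoped InnerProductSpace

variable {H : Type*} [NormedAddCommGroup H] [InnerProductSpace ℂ H] [CompleteSpace H]

/-- The numerical radius of a bounded linear operator. -/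
noncomputable def numRad (A : H →L[ℂ] H) : ℝ :=
  sSup {r : ℝ | ∃ x : H, ‖x‖ = 1 ∧ r = ‖⟪A x, x⟫_ℂ‖}

/-- The absolute value `|A| = (A*A)^(1/2)` of a bounded linear operator. -/
noncomputable def oabs (A : H →L[ℂ] H) : H →L[ℂ] H :=
  CFC.sqrt (ContinuousLinearMap.adjoint A * A)

/-- The spectral radius (as a real number). -/
noncomputable def specRad (A : H →L[ℂ] H) : ℝ := (spectralRadius ℂ A).toReal

open Polynomial

theorem SemiconjBy.aeval {R A : Type*} [CommSemiring R] [Semiring A] [Algebra R A] {a s t : A}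
    (h : SemiconjBy a s t) (p : R[X]) : SemiconjBy a (aeval s p) (aeval t p) := by
  induction p using Polynomial.induction_on' with
  | add p q hp hq => simpa only [map_add] using hp.add_right hq
  | monomial n r =>
    simpa only [aeval_monomial] using
      SemiconjBy.mul_right (Algebra.commute_algebraMap_right r a) (h.pow_right n)

section CStarAlgebra

variable {A : Type*} [CStarAlgebra A]

lemma norm_cfc_sub_cfc_le {s : A} {f g : ℝ → ℝ}
    (hf : Continuous f) (hg : Continuous g) {ε : ℝ} (hε : 0 ≤ ε)
    (h : ∀ x ∈ Set.Icc (-‖s‖) ‖s‖, |f x - g x| ≤ ε) :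
    ‖cfc f s - cfc g s‖ ≤ ε := by
  obtain _ | _ := subsingleton_or_nontrivial A
  · simpa [Subsingleton.elim (cfc f s - cfc g s) 0] using hε
  rw [← cfc_sub f g s]
  exact norm_cfc_le hε fun x hx => h x (abs_le.mp (spectrum.norm_le_norm_of_mem hx))

theorem SemiconjBy.cfc_real {a s t : A} (h : SemiconjBy a s t) (hs : IsSelfAdjoint s)
    (ht : IsSelfAdjoint t) {f : ℝ → ℝ} (hf : Continuous f) :
    SemiconjBy a (cfc f s) (cfc f t) := by
  set M := max ‖s‖ ‖t‖
  rw [SemiconjBy, ← sub_eq_zero, ← norm_le_zero_iff]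
  refine le_of_forall_pos_le_add fun δ hδ => ?_
  set ε := δ / (2 * ‖a‖ + 1)
  have hε : 0 < ε := by positivity
  -- Weierstrass approximation on an interval containing both spectra.
  obtain ⟨p, hp⟩ := exists_polynomial_near_of_continuousOn (-M) M f hf.continuousOn ε hε
  have approx {u : A} (hu : IsSelfAdjoint u) (huM : ‖u‖ ≤ M) :
      ‖cfc f u - Polynomial.aeval u p‖ ≤ ε := by
    rw [← cfc_polynomial p u]
    refine norm_cfc_sub_cfc_le hf p.continuous hε.le fun x hx => ?_
    rw [abs_sub_comm]
    exact (hp x ⟨by linarith [hx.1], hx.2.trans huM⟩).le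
  have hpoly : a * Polynomial.aeval s p = Polynomial.aeval t p * a := h.aeval p
  calc ‖a * cfc f s - cfc f t * a‖
      = ‖a * (cfc f s - Polynomial.aeval s p) - (cfc f t - Polynomial.aeval t p) * a‖ := by
        rw [mul_sub, sub_mul, hpoly]; abel_nf
    _ ≤ ‖a‖ * ε + ε * ‖a‖ := by
        refine (norm_sub_le _ _).trans (add_le_add ?_ ?_)
        · exact (norm_mul_le _ _).trans (by gcongr; exact approx hs (le_max_left _ _))
        · exact (norm_mul_le _ _).trans (by gcongr; exact approx ht (le_max_right _ _))
    _ = 2 * ‖a‖ / (2 * ‖a‖ + 1) * δ := by simp only [ε]; ring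
    _ ≤ 0 + δ := by
        rw [zero_add]
        exact mul_le_of_le_one_left hδ.le ((div_le_one (by positivity)).mpr (by linarith))

end CStarAlgebra

open ContinuousLinearMap

lemma oabs_eq_cfc_sqrt (A : H →L[ℂ] H) : oabs A = cfc Real.sqrt (star A * A) := by
  rw [oabs, ← star_eq_adjoint, CFC.sqrt_eq_real_sqrt _ (star_mul_self_nonneg A), cfcₙ_eq_cfc]

lemma oabs_adjoint_eq_cfc_sqrt (A : H →L[ℂ] H) :
    oabs (adjoint A) = cfc Real.sqrt (A * star A) := by
  rw [oabs_eq_cfc_sqrt, ← star_eq_adjoint, star_star]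

lemma oabs_nonneg (A : H →L[ℂ] H) : 0 ≤ oabs A := CFC.sqrt_nonneg _

lemma re_inner_le_re_inner {E : Type*} [NormedAddCommGroup E] [InnerProductSpace ℂ E]
    {S T : E →L[ℂ] E} (h : S ≤ T) (x : E) :
    (⟪S x, x⟫_ℂ).re ≤ (⟪T x, x⟫_ℂ).re := by
  have := ((le_def S T).mp h).re_inner_nonneg_left x
  simpa [inner_sub_left] using this

lemma IsSelfAdjoint.ofReal_re_inner {T : H →L[ℂ] H} (hT : IsSelfAdjoint T) (x : H) :
    ((⟪T x, x⟫_ℂ).re : ℂ) = ⟪T x, x⟫_ℂ :=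
  hT.isSymmetric.coe_re_inner_apply_self x

theorem norm_inner_sq_le_of_nonneg {S : H →L[ℂ] H} (hS : 0 ≤ S) (x y : H) :
    ‖⟪S x, y⟫_ℂ‖ ^ 2 ≤ (⟪S x, x⟫_ℂ).re * (⟪S y, y⟫_ℂ).re := by
  set R := CFC.sqrt S
  have hR : IsSelfAdjoint R := (CFC.sqrt_nonneg S).isSelfAdjoint
  have hRR : ∀ u v, ⟪S u, v⟫_ℂ = ⟪R u, R v⟫_ℂ := fun u v => by
    rw [← CFC.sqrt_mul_sqrt_self S hS, mul_apply_eq_comp, ← adjoint_inner_left, hR.adjoint_eq]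
  have := inner_mul_inner_self_le (𝕜 := ℂ) (R x) (R y)
  rw [norm_inner_symm (R y), ← sq] at this
  simpa only [hRR, RCLike.re_to_complex] using this

lemma sqrt_add_pos (t : ℝ) {ε : ℝ} (hε : 0 < ε) : 0 < √t + ε :=
  add_pos_of_nonneg_of_pos (Real.sqrt_nonneg t) hε

lemma continuous_inv_sqrt_add {ε : ℝ} (hε : 0 < ε) : Continuous fun t : ℝ => (√t + ε)⁻¹ :=
  (Real.continuous_sqrt.add continuous_const).inv₀ fun t => (sqrt_add_pos t hε).ne'

lemma mul_cfc_inv_sqrt_add_mul_star_le (A : H →L[ℂ] H) {ε : ℝ} (hε : 0 < ε) :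
    A * cfc (fun t => (√t + ε)⁻¹) (star A * A) * star A ≤ oabs (adjoint A) := by
  have hg := continuous_inv_sqrt_add hε
  have hsemi : SemiconjBy A (star A * A) (A * star A) := (mul_assoc _ _ _).symm
  rw [hsemi.cfc_real (.star_mul_self A) (.mul_star_self A) hg, mul_assoc]
  nth_rewrite 2 [← cfc_id' ℝ (A * star A)]
  rw [← cfc_mul _ _ _ hg.continuousOn, oabs_adjoint_eq_cfc_sqrt]
  refine cfc_mono fun t ht => ?_
  have ht0 : 0 ≤ t := spectrum_nonneg_of_nonneg (mul_star_self_nonneg A) ht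
  rw [inv_mul_le_iff₀ (by positivity)]
  nlinarith [Real.mul_self_sqrt ht0, Real.sqrt_nonneg t]

/-- With `S = |A| + ε` and `R = S⁻¹`, write `A = (A R) S` and apply the Cauchy–Schwarz
inequality of the positive form `⟪S ·, ·⟫`; the second factor becomes `⟪A R A* y, y⟫`, which
the intertwining `A f(A*A) = f(AA*) A` bounds by `⟪|A*| y, y⟫`. -/
lemma norm_inner_sq_le_re_inner_oabs_add_mul (A : H →L[ℂ] H) (x y : H) {ε : ℝ} (hε : 0 < ε) :
    ‖⟪A x, y⟫_ℂ‖ ^ 2 ≤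
      ((⟪oabs A x, x⟫_ℂ).re + ε * ‖x‖ ^ 2) * (⟪oabs (adjoint A) y, y⟫_ℂ).re := by
  have hg := continuous_inv_sqrt_add hε
  set R := cfc (fun t => (√t + ε)⁻¹) (star A * A)
  set S := oabs A + algebraMap ℝ _ ε
  have hS_cfc : cfc (fun t => √t + ε) (star A * A) = S := by
    simp only [S, oabs_eq_cfc_sqrt]; exact cfc_add_const ..
  have hRS : R * S = 1 := by
    rw [← hS_cfc, ← cfc_mul _ _ _ hg.continuousOn, ← cfc_const_one ℝ (star A * A)]
    exact cfc_congr fun t _ => inv_mul_cancel₀ (sqrt_add_pos t hε).ne'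
  have hR : IsSelfAdjoint R := cfc_predicate _ _
  have hS : 0 ≤ S := add_nonneg (oabs_nonneg A) (algebraMap_nonneg _ hε.le)
  have hAxy : ⟪A x, y⟫_ℂ = ⟪S x, star (A * R) y⟫_ℂ := by
    rw [star_eq_adjoint, adjoint_inner_right, ← mul_apply_eq_comp, mul_assoc, hRS, mul_one]
  have hSx : (⟪S x, x⟫_ℂ).re = (⟪oabs A x, x⟫_ℂ).re + ε * ‖x‖ ^ 2 := by
    simp [S, Algebra.algebraMap_eq_smul_one, ← Complex.ofReal_pow]
  have hSz : ⟪S (star (A * R) y), star (A * R) y⟫_ℂ = ⟪(A * R * star A) y, y⟫_ℂ := by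
    rw [star_eq_adjoint, adjoint_inner_right, ← mul_apply_eq_comp, ← mul_apply_eq_comp,
      ← star_eq_adjoint, star_mul, hR.star_eq]
    simp only [mul_assoc]
    rw [← mul_assoc R S, hRS, one_mul]
  calc ‖⟪A x, y⟫_ℂ‖ ^ 2
      ≤ (⟪S x, x⟫_ℂ).re * (⟪S (star (A * R) y), star (A * R) y⟫_ℂ).re := by
        rw [hAxy]; exact norm_inner_sq_le_of_nonneg hS x _
    _ ≤ _ := by
        rw [hSx, hSz]
        refine mul_le_mul_of_nonneg_left
          (re_inner_le_re_inner (mul_cfc_inv_sqrt_add_mul_star_le A hε) y) ?_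
        have := re_inner_le_re_inner (oabs_nonneg A) x
        simp only [zero_apply, inner_zero_left, Complex.zero_re] at this
        positivity

theorem norm_inner_sq_le_re_inner_oabs_mul (A : H →L[ℂ] H) (x y : H) :
    ‖⟪A x, y⟫_ℂ‖ ^ 2 ≤ (⟪oabs A x, x⟫_ℂ).re * (⟪oabs (adjoint A) y, y⟫_ℂ).re := by
  have hcont : Continuous fun ε : ℝ =>
      ((⟪oabs A x, x⟫_ℂ).re + ε * ‖x‖ ^ 2) * (⟪oabs (adjoint A) y, y⟫_ℂ).re := by
    fun_prop
  exact ge_of_tendsto (tendsto_nhdsWithin_of_tendsto_nhds (hcont.tendsto' 0 _ (by simp)))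
    (eventually_nhdsWithin_of_forall (s := Set.Ioi 0) fun _ hε =>
      norm_inner_sq_le_re_inner_oabs_add_mul A x y hε)

section NumRad

variable {E : Type*} [NormedAddCommGroup E] [InnerProductSpace ℂ E]

lemma bddAbove_numRad (A : E →L[ℂ] E) :
    BddAbove {r : ℝ | ∃ x : E, ‖x‖ = 1 ∧ r = ‖⟪A x, x⟫_ℂ‖} := by
  refine ⟨‖A‖, ?_⟩
  rintro - ⟨x, hx, rfl⟩
  simpa [hx] using (norm_inner_le_norm (A x) x).trans
    (mul_le_mul_of_nonneg_right (A.le_opNorm x) (norm_nonneg x))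

lemma norm_inner_le_numRad (A : E →L[ℂ] E) {x : E} (hx : ‖x‖ = 1) :
    ‖⟪A x, x⟫_ℂ‖ ≤ numRad A :=
  le_csSup (bddAbove_numRad A) ⟨x, hx, rfl⟩

lemma numRad_nonneg (A : E →L[ℂ] E) : 0 ≤ numRad A :=
  Real.sSup_nonneg fun _ ⟨_, _, hr⟩ => hr ▸ norm_nonneg _

lemma numRad_sq_le {A : E →L[ℂ] E} {c : ℝ} (hc : 0 ≤ c)
    (h : ∀ x : E, ‖x‖ = 1 → ‖⟪A x, x⟫_ℂ‖ ^ 2 ≤ c) : numRad A ^ 2 ≤ c := by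
  refine (Real.le_sqrt (numRad_nonneg A) hc).mp (Real.sSup_le ?_ (Real.sqrt_nonneg c))
  rintro - ⟨x, hx, rfl⟩
  exact Real.le_sqrt_of_sq_le (h x hx)

end NumRad

section SelfAdjoint

variable {B C : H →L[ℂ] H} {x : H}

lemma re_inner_sq_add_re_inner_sq_le_numRad_sq (hB : IsSelfAdjoint B) (hC : IsSelfAdjoint C)
    (hx : ‖x‖ = 1) :
    (⟪B x, x⟫_ℂ).re ^ 2 + (⟪C x, x⟫_ℂ).re ^ 2 ≤ numRad (B + Complex.I • C) ^ 2 := by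
  have hBC : ⟪(B + Complex.I • C) x, x⟫_ℂ =
      (⟪B x, x⟫_ℂ).re + ((-(⟪C x, x⟫_ℂ).re : ℝ) : ℂ) * Complex.I := by
    rw [add_apply, smul_apply, inner_add_left, inner_smul_left, hB.ofReal_re_inner,
      Complex.ofReal_neg, hC.ofReal_re_inner, Complex.conj_I]
    ring
  have hnorm : ‖⟪(B + Complex.I • C) x, x⟫_ℂ‖ ^ 2 =
      (⟪B x, x⟫_ℂ).re ^ 2 + (⟪C x, x⟫_ℂ).re ^ 2 := by
    rw [hBC, Complex.sq_norm, Complex.normSq_add_mul_I, neg_sq]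
  rw [← hnorm]
  exact pow_le_pow_left₀ (norm_nonneg _) (norm_inner_le_numRad _ hx) 2

lemma sq_re_inner_add_re_inner_le (hB : IsSelfAdjoint B) (hC : IsSelfAdjoint C) (hx : ‖x‖ = 1) :
    ((⟪B x, x⟫_ℂ).re + (⟪C x, x⟫_ℂ).re) ^ 2 ≤ ‖B ^ 2 + C ^ 2‖ + 2 * numRad (B * C) := by
  have hBC := hB.add hC
  have hsq : ‖(B + C) x‖ ^ 2 = (⟪((B + C) * (B + C)) x, x⟫_ℂ).re := by
    rw [mul_apply_eq_comp, ← adjoint_inner_right, hBC.adjoint_eq,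
      ← inner_self_eq_norm_sq (𝕜 := ℂ), RCLike.re_to_complex]
  have hCB : (⟪(C * B) x, x⟫_ℂ).re = (⟪(B * C) x, x⟫_ℂ).re := by
    rw [mul_apply_eq_comp, ← adjoint_inner_right, hC.adjoint_eq, mul_apply_eq_comp,
      ← adjoint_inner_right, hB.adjoint_eq, ← inner_conj_symm, Complex.conj_re]
  have hexpand : (B + C) * (B + C) = (B ^ 2 + C ^ 2) + B * C + C * B := by noncomm_ring
  calc ((⟪B x, x⟫_ℂ).re + (⟪C x, x⟫_ℂ).re) ^ 2
      = (⟪(B + C) x, x⟫_ℂ).re ^ 2 := by rw [add_apply, inner_add_left, Complex.add_re]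
    _ ≤ ‖(B + C) x‖ ^ 2 := by
        rw [← sq_abs]
        refine pow_le_pow_left₀ (abs_nonneg _) ((Complex.abs_re_le_norm _).trans ?_) 2
        simpa only [hx, mul_one] using norm_inner_le_norm (𝕜 := ℂ) ((B + C) x) x
    _ = (⟪(B ^ 2 + C ^ 2) x, x⟫_ℂ).re + 2 * (⟪(B * C) x, x⟫_ℂ).re := by
        rw [hsq, hexpand, add_apply, add_apply, inner_add_left, inner_add_left, Complex.add_re,
          Complex.add_re, hCB]
        ring
    _ ≤ ‖B ^ 2 + C ^ 2‖ + 2 * numRad (B * C) := by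
        gcongr
        · simpa only [hx, mul_one, RCLike.re_to_complex] using
            (re_inner_le_norm (𝕜 := ℂ) _ x).trans
              (mul_le_mul_of_nonneg_right ((B ^ 2 + C ^ 2).le_opNorm x) (norm_nonneg x))
        · exact (Complex.re_le_norm _).trans (norm_inner_le_numRad _ hx)

lemma re_inner_mul_re_inner_le (hB : IsSelfAdjoint B) (hC : IsSelfAdjoint C) (hx : ‖x‖ = 1) :
    (⟪B x, x⟫_ℂ).re * (⟪C x, x⟫_ℂ).re ≤
      (1 / 4) * numRad (B + Complex.I • C) ^ 2 + (1 / 8) * ‖B ^ 2 + C ^ 2‖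
        + (1 / 4) * numRad (B * C) := by
  nlinarith [re_inner_sq_add_re_inner_sq_le_numRad_sq hB hC hx,
    sq_re_inner_add_re_inner_le hB hC hx,
    sq_nonneg ((⟪B x, x⟫_ℂ).re - (⟪C x, x⟫_ℂ).re)]

end SelfAdjoint

theorem stmt0 (A : H →L[ℂ] H) :
    numRad A ^ 2 ≤
      (1 / 4) * numRad (oabs A + Complex.I • oabs (ContinuousLinearMap.adjoint A)) ^ 2
        + (1 / 8) * ‖oabs A ^ 2 + oabs (ContinuousLinearMap.adjoint A) ^ 2‖
        + (1 / 4) * numRad (oabs A * oabs (ContinuousLinearMap.adjoint A)) := by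
  have hbound_nonneg := numRad_nonneg (oabs A * oabs (adjoint A))
  refine numRad_sq_le (by positivity) fun x hx => ?_
  exact (norm_inner_sq_le_re_inner_oabs_mul A x x).trans
    (re_inner_mul_re_inner_le (oabs_nonneg A).isSelfAdjoint (oabs_nonneg _).isSelfAdjoint hx)
end

section
/- Let A, B be positive bounded linear operators on a complex Hilbert space. Then ‖A + B‖ ≤ (1/2)·(‖A‖ + ‖B‖ + sqrt((‖A‖ − ‖B‖)² + 4·‖A^{1/2}B^{1/2}‖²)). -/
open scoped InnerProductSpace

variable {H : Type*} [NormedAddCommGroup H] [InnerProductSpace ℂ H] [CompleteSpace H]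

/-!
Put `T x = (A^{1/2} x, B^{1/2} x)`, a map from `H` to `H ⊕ H`. Then `A + B = T*T` and
`‖T*T‖ = ‖TT*‖`, where `TT*` is the operator matrix `[[A, A^{1/2}B^{1/2}], [B^{1/2}A^{1/2}, B]]`.
Bounding each entry by its norm dominates `‖TT*‖` by the spectral norm of the real matrix
`[[‖A‖, c], [c, ‖B‖]]` with `c = ‖A^{1/2}B^{1/2}‖`, i.e. by its larger eigenvalue, which is the
right-hand side.
-/

open scoped InnerProduct
open ContinuousLinearMap

theorem sq_add_sq_le_maxEigenvalue_sq_mul {a b c : ℝ} (hab : 0 ≤ a + b) (u v : ℝ) :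
    (a * u + c * v) ^ 2 + (c * u + b * v) ^ 2 ≤
      ((a + b + √((a - b) ^ 2 + 4 * c ^ 2)) / 2) ^ 2 * (u ^ 2 + v ^ 2) := by
  set s := √((a - b) ^ 2 + 4 * c ^ 2)
  set L := (a + b + s) / 2
  have hs : s ^ 2 = (a - b) ^ 2 + 4 * c ^ 2 := Real.sq_sqrt (by positivity)
  have hab_s : |a - b| ≤ s := Real.abs_le_sqrt (by nlinarith)
  have hp : 0 ≤ L - a := by simp only [L]; linarith [(abs_le.mp hab_s).2]
  have hq : 0 ≤ L - b := by simp only [L]; linarith [(abs_le.mp hab_s).1]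
  have hpq : (L - a) * (L - b) = c ^ 2 := by linear_combination hs / 4
  -- `L` is the larger eigenvalue of `[[a, c], [c, b]]`, so this form is semidefinite
  have hform : 2 * c * (u * v) ≤ (L - a) * u ^ 2 + (L - b) * v ^ 2 := by
    have hc : √(L - a) * √(L - b) = |c| := by
      rw [← Real.sqrt_mul hp, hpq, Real.sqrt_sq_eq_abs]
    calc 2 * c * (u * v) ≤ 2 * |c| * |u * v| := by
          simpa only [abs_mul, abs_two] using le_abs_self (2 * c * (u * v))
      _ = 2 * (√(L - a) * |u|) * (√(L - b) * |v|) := by rw [← hc, abs_mul]; ring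
      _ ≤ (√(L - a) * |u|) ^ 2 + (√(L - b) * |v|) ^ 2 := two_mul_le_add_sq _ _
      _ = (L - a) * u ^ 2 + (L - b) * v ^ 2 := by
          rw [mul_pow, mul_pow, Real.sq_sqrt hp, Real.sq_sqrt hq, sq_abs, sq_abs]
  have key : L ^ 2 * (u ^ 2 + v ^ 2) - (a * u + c * v) ^ 2 - (c * u + b * v) ^ 2
      = (a + b) * ((L - a) * u ^ 2 + (L - b) * v ^ 2 - 2 * c * (u * v)) := by
    linear_combination (u ^ 2 + v ^ 2) * hpq
  nlinarith [mul_nonneg hab (sub_nonneg.mpr hform)]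

section
variable {𝕜 E₁ E₂ F₁ F₂ : Type*} [NontriviallyNormedField 𝕜]
  [NormedAddCommGroup E₁] [NormedSpace 𝕜 E₁] [NormedAddCommGroup E₂] [NormedSpace 𝕜 E₂]
  [NormedAddCommGroup F₁] [NormedSpace 𝕜 F₁] [NormedAddCommGroup F₂] [NormedSpace 𝕜 F₂]

theorem WithLp.prod_opNorm_le_of_block_bounds
    (M : WithLp 2 (E₁ × E₂) →L[𝕜] WithLp 2 (F₁ × F₂)) {a b c : ℝ} (hab : 0 ≤ a + b)
    (h₁ : ∀ y, ‖(M y).fst‖ ≤ a * ‖y.fst‖ + c * ‖y.snd‖)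
    (h₂ : ∀ y, ‖(M y).snd‖ ≤ c * ‖y.fst‖ + b * ‖y.snd‖) :
    ‖M‖ ≤ (a + b + √((a - b) ^ 2 + 4 * c ^ 2)) / 2 := by
  have hL : 0 ≤ (a + b + √((a - b) ^ 2 + 4 * c ^ 2)) / 2 := by positivity
  refine opNorm_le_bound _ hL fun y => ?_
  refine (pow_le_pow_iff_left₀ (norm_nonneg _) (by positivity) two_ne_zero).mp ?_
  calc ‖M y‖ ^ 2 = ‖(M y).fst‖ ^ 2 + ‖(M y).snd‖ ^ 2 := WithLp.prod_norm_sq_eq_of_L2 _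
    _ ≤ (a * ‖y.fst‖ + c * ‖y.snd‖) ^ 2 + (c * ‖y.fst‖ + b * ‖y.snd‖) ^ 2 := by
      gcongr
      exacts [h₁ y, h₂ y]
    _ ≤ ((a + b + √((a - b) ^ 2 + 4 * c ^ 2)) / 2) ^ 2 * (‖y.fst‖ ^ 2 + ‖y.snd‖ ^ 2) :=
      sq_add_sq_le_maxEigenvalue_sq_mul hab _ _
    _ = ((a + b + √((a - b) ^ 2 + 4 * c ^ 2)) / 2 * ‖y‖) ^ 2 := by
      rw [mul_pow, WithLp.prod_norm_sq_eq_of_L2]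

end

namespace ContinuousLinearMap

variable {𝕜 E F : Type*} [RCLike 𝕜] [NormedAddCommGroup E] [InnerProductSpace 𝕜 E]
  [NormedAddCommGroup F] [InnerProductSpace 𝕜 F]

noncomputable def prodL2 (S T : E →L[𝕜] F) : E →L[𝕜] WithLp 2 (F × F) :=
  (WithLp.prodContinuousLinearEquiv 2 𝕜 F F).symm.toContinuousLinearMap ∘L S.prod T

@[simp]
lemma prodL2_apply (S T : E →L[𝕜] F) (x : E) : prodL2 S T x = WithLp.toLp 2 (S x, T x) := rfl

variable [CompleteSpace E] [CompleteSpace F]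

lemma adjoint_prodL2_apply (S T : E →L[𝕜] F) (y : WithLp 2 (F × F)) :
    ((prodL2 S T)†) y = (S†) y.fst + (T†) y.snd := by
  refine ext_inner_right 𝕜 fun x => ?_
  rw [adjoint_inner_left, inner_add_left, adjoint_inner_left, adjoint_inner_left,
    WithLp.prod_inner_apply]
  rfl

lemma adjoint_prodL2_comp_prodL2 (S T : E →L[𝕜] F) :
    (prodL2 S T)† ∘L prodL2 S T = S† ∘L S + T† ∘L T := by
  ext x
  simp [adjoint_prodL2_apply]

lemma norm_adjoint_comp_add_adjoint_comp (S T : E →L[𝕜] F) :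
    ‖S† ∘L S + T† ∘L T‖ = ‖prodL2 S T‖ ^ 2 := by
  rw [← adjoint_prodL2_comp_prodL2, norm_adjoint_comp_self, sq]

lemma norm_comp_adjoint_self (C : E →L[𝕜] F) : ‖C ∘L C†‖ = ‖C‖ ^ 2 := by
  simpa [sq] using norm_adjoint_comp_self (C†)

theorem norm_adjoint_comp_add_adjoint_comp_le (S T : E →L[𝕜] F) :
    ‖S† ∘L S + T† ∘L T‖ ≤
      (‖S‖ ^ 2 + ‖T‖ ^ 2 + √((‖S‖ ^ 2 - ‖T‖ ^ 2) ^ 2 + 4 * ‖S ∘L T†‖ ^ 2)) / 2 := by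
  have hTS : ‖T ∘L S†‖ = ‖S ∘L T†‖ := by
    rw [← adjoint.norm_map, adjoint_comp, adjoint_adjoint]
  rw [norm_adjoint_comp_add_adjoint_comp, ← norm_comp_adjoint_self]
  refine WithLp.prod_opNorm_le_of_block_bounds _ (by positivity) (fun y => ?_) (fun y => ?_)
  · rw [← norm_comp_adjoint_self]
    simpa [adjoint_prodL2_apply] using
      (norm_add_le _ _).trans
        (add_le_add ((S ∘L S†).le_opNorm y.fst) ((S ∘L T†).le_opNorm y.snd))
  · rw [← norm_comp_adjoint_self, ← hTS]
    simpa [adjoint_prodL2_apply] using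
      (norm_add_le _ _).trans
        (add_le_add ((T ∘L S†).le_opNorm y.fst) ((T ∘L T†).le_opNorm y.snd))

end ContinuousLinearMap

set_option synthInstance.maxHeartbeats 400000 in
theorem stmt13 (A B : H →L[ℂ] H) (hA : A.IsPositive) (hB : B.IsPositive) :
    ‖A + B‖ ≤ (1 / 2) * (‖A‖ + ‖B‖ +
      Real.sqrt ((‖A‖ - ‖B‖) ^ 2 + 4 * ‖CFC.sqrt A * CFC.sqrt B‖ ^ 2)) := by
  have hA₀ : 0 ≤ A := (nonneg_iff_isPositive A).mpr hA
  have hB₀ : 0 ≤ B := (nonneg_iff_isPositive B).mpr hB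
  have hsA : IsSelfAdjoint (CFC.sqrt A) := .of_nonneg (CFC.sqrt_nonneg A)
  have hsB : IsSelfAdjoint (CFC.sqrt B) := .of_nonneg (CFC.sqrt_nonneg B)
  have hA_sq : ‖CFC.sqrt A‖ ^ 2 = ‖A‖ := by
    rw [← hsA.norm_mul_self, CFC.sqrt_mul_sqrt_self A hA₀]
  have hB_sq : ‖CFC.sqrt B‖ ^ 2 = ‖B‖ := by
    rw [← hsB.norm_mul_self, CFC.sqrt_mul_sqrt_self B hB₀]
  have h := norm_adjoint_comp_add_adjoint_comp_le (CFC.sqrt A) (CFC.sqrt B)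
  rw [hsA.adjoint_eq, hsB.adjoint_eq, hA_sq, hB_sq, ← mul_def, ← mul_def, ← mul_def,
    CFC.sqrt_mul_sqrt_self A hA₀, CFC.sqrt_mul_sqrt_self B hB₀] at h
  linarith
end

section
/- For every bounded linear operator A on a complex Hilbert space, r(A) ≤ ((1/2)·‖A²‖ + (1/2)·‖A⁴‖^{1/2})^{1/2}. -/
open scoped InnerProductSpace ENNReal

variable {H : Type*} [NormedAddCommGroup H] [InnerProductSpace ℂ H] [CompleteSpace H]

theorem stmt18 (A : H →L[ℂ] H) :
    specRad A ≤ ((1 / 2) * ‖A ^ 2‖ + (1 / 2) * ‖A ^ 4‖ ^ ((1 : ℝ) / 2)) ^ ((1 : ℝ) / 2) := by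
  have hA4 : ‖A ^ 4‖ ≤ ‖A ^ 2‖ ^ 2 := by
    have h4 : A ^ 4 = (A ^ 2) ^ 2 := by rw [← pow_mul]
    rw [h4]
    exact norm_pow_le' (A ^ 2) two_pos
  -- Step 1: specRad A ≤ ‖A⁴‖ ^ (1/4)
  have hone : (‖(1 : H →L[ℂ] H)‖₊ : ℝ≥0∞) ≤ 1 := by
    have : ‖(1 : H →L[ℂ] H)‖ ≤ 1 := ContinuousLinearMap.norm_id_le
    exact_mod_cast this
  have hens : spectralRadius ℂ A ≤ (‖A ^ 4‖₊ : ℝ≥0∞) ^ ((1 : ℝ) / 4) := by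
    have h := spectrum.spectralRadius_le_pow_nnnorm_pow_one_div ℂ A 3
    norm_num at h
    calc spectralRadius ℂ A
        ≤ (‖A ^ 4‖₊ : ℝ≥0∞) ^ ((1 : ℝ) / 4) * (‖(1 : H →L[ℂ] H)‖₊ : ℝ≥0∞) ^ ((1 : ℝ) / 4) := by
          convert h using 2 <;> norm_num
      _ ≤ (‖A ^ 4‖₊ : ℝ≥0∞) ^ ((1 : ℝ) / 4) * 1 := by
          gcongr
          exact ENNReal.rpow_le_one hone (by norm_num)
      _ = (‖A ^ 4‖₊ : ℝ≥0∞) ^ ((1 : ℝ) / 4) := mul_one _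
  have hr : specRad A ≤ ‖A ^ 4‖ ^ ((1 : ℝ) / 4) := by
    have hfin : ((‖A ^ 4‖₊ : ℝ≥0∞) ^ ((1 : ℝ) / 4)) ≠ ⊤ := by
      exact ENNReal.rpow_ne_top_of_nonneg (by norm_num) ENNReal.coe_ne_top
    have := ENNReal.toReal_mono hfin hens
    rw [← ENNReal.toReal_rpow, ENNReal.coe_toReal, coe_nnnorm] at this
    exact this
  refine hr.trans ?_
  -- Step 2: ‖A⁴‖^(1/4) ≤ RHS
  have h2 : ‖A ^ 4‖ ^ ((1 : ℝ) / 2) ≤ ‖A ^ 2‖ := by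
    have := Real.rpow_le_rpow (norm_nonneg _) hA4 (by norm_num : (0:ℝ) ≤ 1/2)
    rwa [← Real.rpow_natCast ‖A ^ 2‖ 2, ← Real.rpow_mul (norm_nonneg _),
      (by norm_num : ((2:ℕ):ℝ) * (1/2) = 1), Real.rpow_one] at this
  have key : ‖A ^ 4‖ ^ ((1 : ℝ) / 4) = (‖A ^ 4‖ ^ ((1 : ℝ) / 2)) ^ ((1 : ℝ) / 2) := by
    rw [← Real.rpow_mul (norm_nonneg _)]
    norm_num
  rw [key]
  apply Real.rpow_le_rpow (Real.rpow_nonneg (norm_nonneg _) _) _ (by norm_num)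
  nlinarith [Real.rpow_nonneg (norm_nonneg (A ^ 4)) ((1:ℝ)/2)]
end

section
/- Let x, y, e be vectors in a complex Hilbert space with ‖e‖ = 1. Then |⟨x, e⟩·⟨e, y⟩| ≤ (1/2)·(‖x‖·‖y‖ + |⟨x, y⟩|) (Buzano's inequality). -/
open scoped InnerProductSpace

theorem stmt19 {H : Type*} [NormedAddCommGroup H] [InnerProductSpace ℂ H]
    (x y e : H) (he : ‖e‖ = 1) :
    ‖⟪x, e⟫_ℂ * ⟪e, y⟫_ℂ‖ ≤ (1 / 2) * (‖x‖ * ‖y‖ + ‖⟪x, y⟫_ℂ‖) := by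
  set u : H := (2 * ⟪e, y⟫_ℂ) • e - y with hu
  have hnorm : ‖u‖ = ‖y‖ := by
    have h1 : ‖u‖ ^ 2 = ‖y‖ ^ 2 := by
      have hsq : (‖u‖ : ℝ) ^ 2 = ‖(2 * ⟪e, y⟫_ℂ) • e‖ ^ 2 - 2 * (RCLike.re (⟪(2 * ⟪e, y⟫_ℂ) • e, y⟫_ℂ)) + ‖y‖ ^ 2 := by
        rw [hu]
        rw [@norm_sub_sq ℂ]
      have hinner : ⟪(2 * ⟪e, y⟫_ℂ) • e, y⟫_ℂ = 2 * ((starRingEnd ℂ) ⟪e, y⟫_ℂ * ⟪e, y⟫_ℂ) := by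
        rw [inner_smul_left, map_mul, Complex.conj_ofNat]
        ring
      have hne : ‖(2 * ⟪e, y⟫_ℂ) • e‖ ^ 2 = 4 * ‖⟪e, y⟫_ℂ‖ ^ 2 := by
        rw [norm_smul, he]
        simp [norm_mul]
        ring
      rw [hsq, hne, hinner]
      have : RCLike.re (2 * ((starRingEnd ℂ) ⟪e, y⟫_ℂ * ⟪e, y⟫_ℂ)) = 2 * ‖⟪e, y⟫_ℂ‖ ^ 2 := by
        rw [Complex.conj_mul']
        simp
        norm_cast
      rw [this]
      ring
    nlinarith [norm_nonneg u, norm_nonneg y]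
  have key : 2 * (⟪x, e⟫_ℂ * ⟪e, y⟫_ℂ) = ⟪x, u⟫_ℂ + ⟪x, y⟫_ℂ := by
    rw [hu, inner_sub_right, inner_smul_right]
    ring
  have h2 : ‖2 * (⟪x, e⟫_ℂ * ⟪e, y⟫_ℂ)‖ ≤ ‖x‖ * ‖y‖ + ‖⟪x, y⟫_ℂ‖ := by
    rw [key]
    calc ‖⟪x, u⟫_ℂ + ⟪x, y⟫_ℂ‖ ≤ ‖⟪x, u⟫_ℂ‖ + ‖⟪x, y⟫_ℂ‖ := norm_add_le _ _
      _ ≤ ‖x‖ * ‖u‖ + ‖⟪x, y⟫_ℂ‖ := by gcongr; exact norm_inner_le_norm x u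
      _ = ‖x‖ * ‖y‖ + ‖⟪x, y⟫_ℂ‖ := by rw [hnorm]
  have h3 : ‖(2:ℂ)‖ = 2 := by simp
  rw [norm_mul, h3] at h2
  linarith
end
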